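/- arXiv:2502.09074 — 2 statements merged into one kernel-verified Lean document; each statement's English description precedes it below -/
import Mathlib

section
/- Let g : ℝⁿ × ℝᵐ → ℝ be C² and parametric Morse (for every x, g(x,·) is Morse), and suppose the set-valued map x ↦ crit g(x,·) is nonempty and locally bounded, with the cardinality of crit g(x,·) uniformly bounded in x. Then the number of critical points M(x) = #crit g(x,·) is finite and constant over x ∈ ℝⁿ, and there exist C¹ functions y^{(1)}, …, y^{(M)} : ℝⁿ → ℝᵐ with pairwise distinct values at every point, whose graphs partition the graph of x ↦ crit g(x,·). -/
set_option maxHeartbeats 1000000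

open Metric Set Filter Topology

namespace CriticalBranchesAux

variable {n m : ℕ}
local notation "E" => EuclideanSpace ℝ (Fin n)
local notation "F" => EuclideanSpace ℝ (Fin m)

lemma contDiff_grad (g : E → F → ℝ)
    (hg : ContDiff ℝ 2 (fun p : E × F => g p.1 p.2)) :
    ContDiff ℝ 1 (fun p : E × F => gradient (g p.1) p.2) := by
  have hf : ContDiff ℝ 2 (Function.uncurry fun (p : E × F) (y : F) => g p.1 y) := by
    have : (Function.uncurry fun (p : E × F) (y : F) => g p.1 y)
        = (fun p : E × F => g p.1 p.2) ∘ (fun q : (E × F) × F => (q.1.1, q.2)) := rfl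
    rw [this]
    exact hg.comp ((contDiff_fst.comp contDiff_fst).prodMk contDiff_snd)
  have h1 : ContDiff ℝ 1 (fun p : E × F => fderiv ℝ (g p.1) p.2) :=
    ContDiff.fderiv hf contDiff_snd (by norm_num)
  have h2 : ContDiff ℝ 1 fun q : F →L[ℝ] ℝ => (InnerProductSpace.toDual ℝ F).symm q :=
    (InnerProductSpace.toDual ℝ F).symm.contDiff
  exact h2.comp h1

lemma local_branch (g : E → F → ℝ)
    (hG : ContDiff ℝ 1 (fun p : E × F => gradient (g p.1) p.2))
    (hMorse : ∀ x y, gradient (g x) y = 0 →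
      ∃ e : F ≃L[ℝ] F, (e : F →L[ℝ] F) = fderiv ℝ (gradient (g x)) y)
    (x₀ : E) (y₀ : F) (h0 : gradient (g x₀) y₀ = 0) :
    ∃ ε δ : ℝ, 0 < ε ∧ 0 < δ ∧ ∃ φ : E → F, φ x₀ = y₀ ∧ ContDiffAt ℝ 1 φ x₀ ∧
      ContinuousOn φ (ball x₀ ε) ∧ (∀ x ∈ ball x₀ ε, φ x ∈ ball y₀ δ) ∧
      (∀ x ∈ ball x₀ ε, ∀ y ∈ ball y₀ δ, (gradient (g x) y = 0 ↔ y = φ x)) := by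
  set G : E × F → F := fun p => gradient (g p.1) p.2 with hGdef
  have hGdiff : DifferentiableAt ℝ G (x₀, y₀) :=
    (hG.differentiable one_ne_zero).differentiableAt
  set D : E × F →L[ℝ] F := fderiv ℝ G (x₀, y₀) with hD
  have hDG : HasFDerivAt G D (x₀, y₀) := hGdiff.hasFDerivAt
  obtain ⟨e, he⟩ := hMorse x₀ y₀ h0
  have hinr : HasFDerivAt (fun y : F => G (x₀, y)) (D.comp (ContinuousLinearMap.inr ℝ E F)) y₀ :=
    hDG.comp y₀ ((hasFDerivAt_const x₀ y₀).prodMk (hasFDerivAt_id y₀))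
  have he' : ∀ η : F, e η = D (0, η) := by
    intro η
    have := congrArg (fun (L : F →L[ℝ] F) => L η) (he.trans (hinr.fderiv : _))
    simpa using this
  have hsplit : ∀ p : E × F, D p = D (p.1, 0) + D (0, p.2) := by
    intro p
    rw [← map_add]
    congr 1
    simp
  -- the continuous linear equiv that is the derivative of Φ = (x, G(x,y))
  set Φ' : (E × F) ≃L[ℝ] (E × F) := ContinuousLinearEquiv.equivOfInverse
    ((ContinuousLinearMap.fst ℝ E F).prod D)
    ((ContinuousLinearMap.fst ℝ E F).prod ((e.symm : F →L[ℝ] F).comp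
      ((ContinuousLinearMap.snd ℝ E F) - D.comp ((ContinuousLinearMap.inl ℝ E F).comp
        (ContinuousLinearMap.fst ℝ E F)))))
    (by
      intro p
      refine Prod.ext rfl ?_
      simp only [ContinuousLinearMap.prod_apply, ContinuousLinearMap.coe_fst',
        ContinuousLinearMap.coe_comp', Function.comp_apply, ContinuousLinearMap.coe_sub',
        Pi.sub_apply, ContinuousLinearMap.coe_snd', ContinuousLinearMap.inl_apply]
      simp only [ContinuousLinearEquiv.coe_coe]
      have : D p - D (p.1, 0) = e p.2 := by
        rw [he' p.2, hsplit p]; abel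
      rw [this]
      exact e.symm_apply_apply p.2)
    (by
      intro p
      refine Prod.ext rfl ?_
      simp only [ContinuousLinearMap.prod_apply, ContinuousLinearMap.coe_fst',
        ContinuousLinearMap.coe_comp', Function.comp_apply, ContinuousLinearMap.coe_sub',
        Pi.sub_apply, ContinuousLinearMap.coe_snd', ContinuousLinearMap.inl_apply]
      conv_lhs => rw [hsplit]
      simp only [ContinuousLinearEquiv.coe_coe]
      rw [← he' (e.symm (p.2 - D (p.1, 0))), e.apply_symm_apply]
      abel) with hΦ'
  set Φ : E × F → E × F := fun p => (p.1, G p) with hΦdef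
  have hΦcd : ContDiff ℝ 1 Φ := contDiff_fst.prodMk hG
  have hΦ'coe : (Φ' : E × F →L[ℝ] E × F) = (ContinuousLinearMap.fst ℝ E F).prod D := rfl
  have hΦderiv : HasFDerivAt Φ (Φ' : E × F →L[ℝ] E × F) (x₀, y₀) := by
    rw [hΦ'coe]
    exact (hasFDerivAt_fst).prodMk hDG
  set P : OpenPartialHomeomorph (E × F) (E × F) :=
    hΦcd.contDiffAt.toOpenPartialHomeomorph Φ hΦderiv one_ne_zero with hP
  have hPcoe : (P : E × F → E × F) = Φ :=
    ContDiffAt.toOpenPartialHomeomorph_coe hΦcd.contDiffAt hΦderiv one_ne_zero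
  have hsrc : (x₀, y₀) ∈ P.source :=
    ContDiffAt.mem_toOpenPartialHomeomorph_source hΦcd.contDiffAt hΦderiv one_ne_zero
  have hΦ0 : Φ (x₀, y₀) = (x₀, 0) := Prod.ext rfl h0
  have htgt : (x₀, (0 : F)) ∈ P.target := by
    have := ContDiffAt.image_mem_toOpenPartialHomeomorph_target hΦcd.contDiffAt hΦderiv one_ne_zero
    rwa [hΦ0] at this
  have hPsymm0 : P.symm (x₀, 0) = (x₀, y₀) := by
    have h1 := P.left_inv hsrc
    rwa [hPcoe, hΦ0] at h1
  set φ : E → F := fun x => (P.symm (x, 0)).2 with hφdef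
  have hφx₀ : φ x₀ = y₀ := by
    simp only [hφdef, hPsymm0]
  have hsymm_cd : ContDiffAt ℝ 1 (P.symm) (x₀, 0) := by
    apply P.contDiffAt_symm htgt
    · rw [hPsymm0, hPcoe]; exact hΦderiv
    · rw [hPsymm0, hPcoe]; exact hΦcd.contDiffAt
  have hφcd : ContDiffAt ℝ 1 φ x₀ := by
    have hin : ContDiffAt ℝ 1 (fun x : E => ((x, (0 : F)) : E × F)) x₀ :=
      contDiffAt_id.prodMk contDiffAt_const
    exact contDiffAt_snd.comp x₀ (hsymm_cd.comp x₀ hin)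
  -- the iff on the open set N
  set N : Set (E × F) := P.source ∩ {p : E × F | (p.1, (0:F)) ∈ P.target} with hN
  have hNopen : IsOpen N :=
    P.open_source.inter (P.open_target.preimage (by fun_prop))
  have hNmem : (x₀, y₀) ∈ N := ⟨hsrc, htgt⟩
  have hiff : ∀ p ∈ N, (G p = 0 ↔ p.2 = φ p.1) := by
    rintro p ⟨hps, hpt⟩
    constructor
    · intro hGp
      have hΦp : Φ p = (p.1, 0) := Prod.ext rfl hGp
      have := P.left_inv hps
      rw [hPcoe, hΦp] at this
      simp only [hφdef]
      rw [this]
    · intro hyp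
      have hq : P.symm (p.1, 0) ∈ P.source := P.map_target hpt
      have hPq : (P : E × F → E × F) (P.symm (p.1, 0)) = (p.1, 0) := P.right_inv hpt
      rw [hPcoe] at hPq
      have h1 : (P.symm (p.1, 0)).1 = p.1 := by
        have := congrArg Prod.fst hPq; simpa [hΦdef] using this
      have h2 : G (P.symm (p.1, 0)) = 0 := by
        have := congrArg Prod.snd hPq; simpa [hΦdef] using this
      have hqp : P.symm (p.1, 0) = p := by
        refine Prod.ext h1 ?_
        exact hyp.symm
      rwa [hqp] at h2
  -- convert to metric balls
  obtain ⟨ε₂, hε₂pos, hball⟩ := Metric.isOpen_iff.1 hNopen _ hNmem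
  have hprodball : ∀ x ∈ ball x₀ ε₂, ∀ y ∈ ball y₀ ε₂, ((x, y) : E × F) ∈ N := by
    intro x hx y hy
    apply hball
    rw [mem_ball, Prod.dist_eq]
    exact max_lt hx hy
  -- continuity of φ on a small ball
  have hO : ∀ x ∈ ball x₀ ε₂, ((x, (0:F)) : E × F) ∈ P.target := by
    intro x hx
    exact (hprodball x hx y₀ (mem_ball_self hε₂pos)).2
  have hφcont : ContinuousOn φ (ball x₀ ε₂) := by
    have h1 : ContinuousOn (fun x : E => ((x, (0:F)) : E × F)) (ball x₀ ε₂) :=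
      (continuous_id.prodMk continuous_const).continuousOn
    have h2 : ContinuousOn (P.symm) P.target := P.continuousOn_symm
    exact continuous_snd.comp_continuousOn (h2.comp h1 hO)
  -- shrink so that φ maps into ball y₀ ε₂
  have hφatx₀ : ContinuousAt φ x₀ := hφcd.continuousAt
  have : ∀ᶠ x in nhds x₀, φ x ∈ ball y₀ ε₂ := by
    apply hφatx₀.preimage_mem_nhds
    rw [hφx₀]
    exact ball_mem_nhds y₀ hε₂pos
  obtain ⟨ε₃, hε₃pos, hε₃⟩ := Metric.eventually_nhds_iff_ball.1 this
  refine ⟨min ε₂ ε₃, ε₂, lt_min hε₂pos hε₃pos, hε₂pos, φ, hφx₀, hφcd,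
    hφcont.mono (ball_subset_ball (min_le_left _ _)), ?_, ?_⟩
  · intro x hx
    exact hε₃ x (mem_of_mem_of_subset hx (ball_subset_ball (min_le_right _ _)))
  · intro x hx y hy
    exact hiff (x, y) (hprodball x (mem_of_mem_of_subset hx (ball_subset_ball (min_le_left _ _))) y hy)

lemma section_eventually_eq (g : E → F → ℝ)
    (hG : ContDiff ℝ 1 (fun p : E × F => gradient (g p.1) p.2))
    (hMorse : ∀ x y, gradient (g x) y = 0 →
      ∃ e : F ≃L[ℝ] F, (e : F →L[ℝ] F) = fderiv ℝ (gradient (g x)) y) {U : Set E} (hU : IsOpen U) {u v : E → F}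
    (hu : ContinuousOn u U) (hv : ContinuousOn v U)
    (hsu : ∀ x ∈ U, gradient (g x) (u x) = 0) (hsv : ∀ x ∈ U, gradient (g x) (v x) = 0)
    {x : E} (hx : x ∈ U) (hxy : u x = v x) : ∀ᶠ x' in 𝓝 x, u x' = v x' := by
  obtain ⟨ε, δ, hε, hδ, φ, hφx, hφcd, hφcont, hφmap, hiff⟩ :=
    CriticalBranchesAux.local_branch g hG hMorse x (u x) (hsu x hx)
  have hcu : ContinuousAt u x := hu.continuousAt (hU.mem_nhds hx)
  have hcv : ContinuousAt v x := hv.continuousAt (hU.mem_nhds hx)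
  have h1 : ∀ᶠ x' in 𝓝 x, x' ∈ ball x ε := ball_mem_nhds x hε
  have h2 : ∀ᶠ x' in 𝓝 x, u x' ∈ ball (u x) δ :=
    hcu.preimage_mem_nhds (ball_mem_nhds _ hδ)
  have h2' : ∀ᶠ x' in 𝓝 x, v x' ∈ ball (u x) δ := by
    apply hcv.preimage_mem_nhds
    rw [← hxy]
    exact ball_mem_nhds _ hδ
  have h3 : ∀ᶠ x' in 𝓝 x, x' ∈ U := hU.mem_nhds hx
  filter_upwards [h1, h2, h2', h3] with x' hx1 hx2 hx2' hx3
  rw [(hiff x' hx1 (u x') hx2).1 (hsu x' hx3), (hiff x' hx1 (v x') hx2').1 (hsv x' hx3)]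

lemma section_contDiffAt (g : E → F → ℝ)
    (hG : ContDiff ℝ 1 (fun p : E × F => gradient (g p.1) p.2))
    (hMorse : ∀ x y, gradient (g x) y = 0 →
      ∃ e : F ≃L[ℝ] F, (e : F →L[ℝ] F) = fderiv ℝ (gradient (g x)) y) {U : Set E} (hU : IsOpen U) {u : E → F}
    (hu : ContinuousOn u U) (hsu : ∀ x ∈ U, gradient (g x) (u x) = 0)
    {x : E} (hx : x ∈ U) : ContDiffAt ℝ 1 u x := by
  obtain ⟨ε, δ, hε, hδ, φ, hφx, hφcd, hφcont, hφmap, hiff⟩ :=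
    CriticalBranchesAux.local_branch g hG hMorse x (u x) (hsu x hx)
  have hcu : ContinuousAt u x := hu.continuousAt (hU.mem_nhds hx)
  have hev : ∀ᶠ x' in 𝓝 x, u x' = φ x' := by
    have h1 : ∀ᶠ x' in 𝓝 x, x' ∈ ball x ε := ball_mem_nhds x hε
    have h2 : ∀ᶠ x' in 𝓝 x, u x' ∈ ball (u x) δ :=
      hcu.preimage_mem_nhds (ball_mem_nhds _ hδ)
    have h3 : ∀ᶠ x' in 𝓝 x, x' ∈ U := hU.mem_nhds hx
    filter_upwards [h1, h2, h3] with x' hx1 hx2 hx3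
    exact (hiff x' hx1 (u x') hx2).1 (hsu x' hx3)
  exact hφcd.congr_of_eventuallyEq hev

lemma section_unique (g : E → F → ℝ)
    (hG : ContDiff ℝ 1 (fun p : E × F => gradient (g p.1) p.2))
    (hMorse : ∀ x y, gradient (g x) y = 0 →
      ∃ e : F ≃L[ℝ] F, (e : F →L[ℝ] F) = fderiv ℝ (gradient (g x)) y) {U : Set E} (hU : IsOpen U) (hUc : IsPreconnected U) {u v : E → F}
    (hu : ContinuousOn u U) (hv : ContinuousOn v U)
    (hsu : ∀ x ∈ U, gradient (g x) (u x) = 0) (hsv : ∀ x ∈ U, gradient (g x) (v x) = 0)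
    {x₀ : E} (hx₀ : x₀ ∈ U) (hxy : u x₀ = v x₀) : ∀ x ∈ U, u x = v x := by
  set S₁ : Set E := {x | ∀ᶠ x' in 𝓝 x, u x' = v x'} with hS₁
  set S₂ : Set E := {x | x ∈ U ∧ u x ≠ v x} with hS₂
  have hS₁open : IsOpen S₁ := isOpen_setOf_eventually_nhds
  have hS₂open : IsOpen S₂ := by
    rw [isOpen_iff_mem_nhds]
    rintro x ⟨hxU, hxne⟩
    have hcd : ContinuousAt (fun x' => dist (u x') (v x')) x :=
      (hu.continuousAt (hU.mem_nhds hxU)).dist (hv.continuousAt (hU.mem_nhds hxU))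
    have h1 : ∀ᶠ x' in 𝓝 x, 0 < dist (u x') (v x') :=
      hcd.preimage_mem_nhds (isOpen_Ioi.mem_nhds (dist_pos.2 hxne))
    filter_upwards [h1, hU.mem_nhds hxU] with x' h1' h2'
    exact ⟨h2', dist_pos.1 h1'⟩
  have hdisj : Disjoint S₁ S₂ := by
    rw [Set.disjoint_left]
    rintro x hx1 ⟨hxU, hxne⟩
    exact hxne hx1.self_of_nhds
  have hcover : U ⊆ S₁ ∪ S₂ := by
    intro x hxU
    by_cases h : u x = v x
    · exact Or.inl (section_eventually_eq g hG hMorse hU hu hv hsu hsv hxU h)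
    · exact Or.inr ⟨hxU, h⟩
  have hne : (U ∩ S₁).Nonempty :=
    ⟨x₀, hx₀, section_eventually_eq g hG hMorse hU hu hv hsu hsv hx₀ hxy⟩
  have := hUc.subset_left_of_subset_union hS₁open hS₂open hdisj hcover hne
  intro x hx
  exact (this hx).self_of_nhds


lemma local_cover (g : E → F → ℝ)
    (hG : ContDiff ℝ 1 (fun p : E × F => gradient (g p.1) p.2))
    (hMorse : ∀ x y, gradient (g x) y = 0 →
      ∃ e : F ≃L[ℝ] F, (e : F →L[ℝ] F) = fderiv ℝ (gradient (g x)) y)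
    (hlocbdd : ∀ x, ∃ U ∈ nhds x, ∃ C : ℝ, ∀ x' ∈ U, ∀ y, gradient (g x') y = 0 → ‖y‖ ≤ C)
    (hfin : ∀ x, {y | gradient (g x) y = 0}.Finite)
    (xh : E) :
    ∃ ρ : ℝ, 0 < ρ ∧ ∀ x ∈ ball xh ρ, ∀ y : F, gradient (g x) y = 0 →
      ∃ ψ : E → F, ContinuousOn ψ (ball xh ρ) ∧
        (∀ x' ∈ ball xh ρ, gradient (g x') (ψ x') = 0) ∧ ψ x = y := by
  classical
  set S : Set F := {y | gradient (g xh) y = 0} with hSdef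
  have hSfin : S.Finite := hfin xh
  -- choose branches for each critical point
  have hch : ∀ y : F, ∃ ε δ : ℝ, ∃ φ : E → F, y ∈ S →
      (0 < ε ∧ 0 < δ ∧ φ xh = y ∧ ContinuousOn φ (ball xh ε) ∧
       (∀ x ∈ ball xh ε, φ x ∈ ball y δ) ∧
       (∀ x ∈ ball xh ε, ∀ y' ∈ ball y δ, (gradient (g x) y' = 0 ↔ y' = φ x))) := by
    intro y
    by_cases hy : y ∈ S
    · obtain ⟨ε, δ, hε, hδ, φ, h1, h2, h3, h4, h5⟩ := CriticalBranchesAux.local_branch g hG hMorse xh y hy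
      exact ⟨ε, δ, φ, fun _ => ⟨hε, hδ, h1, h3, h4, h5⟩⟩
    · exact ⟨1, 1, fun _ => 0, fun h => absurd h hy⟩
  choose ε δ φ hspec using hch
  -- a uniform lower bound for the ε's
  have hρ₁ : ∃ ρ₁ : ℝ, 0 < ρ₁ ∧ ∀ y ∈ S, ρ₁ ≤ ε y := by
    rcases hSfin.toFinset.eq_empty_or_nonempty with h | h
    · exact ⟨1, one_pos, fun y hy => by
        exfalso; rw [← hSfin.mem_toFinset] at hy; simp [h] at hy⟩
    · obtain ⟨y₀, hy₀, hmin⟩ := hSfin.toFinset.exists_min_image ε h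
      refine ⟨ε y₀, ?_, fun y hy => hmin y (hSfin.mem_toFinset.2 hy)⟩
      exact (hspec y₀ (hSfin.mem_toFinset.1 hy₀)).1
  obtain ⟨ρ₁, hρ₁pos, hρ₁le⟩ := hρ₁
  -- local boundedness
  obtain ⟨U, hU, C, hC⟩ := hlocbdd xh
  obtain ⟨rU, hrUpos, hrU⟩ := Metric.mem_nhds_iff.1 hU
  -- main claim by contradiction
  have hmain : ∃ ρ : ℝ, 0 < ρ ∧ ρ ≤ ρ₁ ∧ ∀ x ∈ ball xh ρ, ∀ y : F,
      gradient (g x) y = 0 → ∃ y₀ ∈ S, dist y y₀ < δ y₀ := by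
    by_contra hcon
    push_neg at hcon
    have hseq : ∀ j : ℕ, ∃ x ∈ ball xh (min (min ρ₁ rU) (1 / (j + 1 : ℝ))), ∃ y : F,
        gradient (g x) y = 0 ∧ ∀ y₀ ∈ S, δ y₀ ≤ dist y y₀ := by
      intro j
      have hpos : 0 < min (min ρ₁ rU) (1 / (j + 1 : ℝ)) :=
        lt_min (lt_min hρ₁pos hrUpos) (by positivity)
      obtain ⟨x, hx, y, hy, hfar⟩ := hcon _ hpos ((min_le_left _ _).trans (min_le_left _ _))
      exact ⟨x, hx, y, hy, hfar⟩
    choose xs hxs ys hys hfar using hseq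
    have hbd : ∀ j, ys j ∈ closedBall (0 : F) C := by
      intro j
      rw [mem_closedBall_zero_iff]
      refine hC (xs j) (hrU ?_) (ys j) (hys j)
      exact mem_of_mem_of_subset (hxs j)
        (ball_subset_ball ((min_le_left _ _).trans (min_le_right _ _)))
    obtain ⟨ystar, hystar, σ, hσmono, hσtend⟩ :=
      (isCompact_closedBall (0 : F) C).tendsto_subseq hbd
    have hxtend : Tendsto xs atTop (𝓝 xh) := by
      rw [tendsto_iff_dist_tendsto_zero]
      apply squeeze_zero (fun j => dist_nonneg) (fun j => le_of_lt ?_)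
      · exact tendsto_one_div_add_atTop_nhds_zero_nat
      · exact (mem_ball.1 (hxs j)).trans_le (min_le_right _ _)
    have hxσ : Tendsto (xs ∘ σ) atTop (𝓝 xh) := hxtend.comp hσmono.tendsto_atTop
    have hpair : Tendsto (fun j => ((xs (σ j), ys (σ j)) : E × F)) atTop (𝓝 (xh, ystar)) :=
      hxσ.prodMk_nhds hσtend
    have hGzero : gradient (g xh) ystar = 0 := by
      have h1 : Tendsto (fun j => gradient (g (xs (σ j))) (ys (σ j))) atTop
          (𝓝 (gradient (g xh) ystar)) :=
        (hG.continuous.tendsto _).comp hpair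
      have h2 : (fun j => gradient (g (xs (σ j))) (ys (σ j))) = fun _ => 0 := by
        funext j; exact hys (σ j)
      rw [h2] at h1
      exact (tendsto_nhds_unique tendsto_const_nhds h1).symm
    have hySmem : ystar ∈ S := hGzero
    have hδpos : 0 < δ ystar := (hspec ystar hySmem).2.1
    have hev : ∀ᶠ j in atTop, dist (ys (σ j)) ystar < δ ystar := by
      have := hσtend (ball_mem_nhds ystar hδpos)
      filter_upwards [this] with j hj using mem_ball.1 hj
    obtain ⟨j, hj⟩ := hev.exists
    exact absurd hj (not_lt.2 (hfar (σ j) ystar hySmem))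
  obtain ⟨ρ, hρpos, hρle, hρ⟩ := hmain
  refine ⟨ρ, hρpos, ?_⟩
  intro x hx y hy
  obtain ⟨y₀, hy₀S, hyd⟩ := hρ x hx y hy
  have hsub : ball xh ρ ⊆ ball xh (ε y₀) := ball_subset_ball (hρle.trans (hρ₁le y₀ hy₀S))
  obtain ⟨-, -, -, hcont, hmap, hiff⟩ := hspec y₀ hy₀S
  refine ⟨φ y₀, hcont.mono hsub, ?_, ?_⟩
  · intro x' hx'
    exact (hiff x' (hsub hx') (φ y₀ x') (hmap x' (hsub hx'))).2 rfl
  · exact ((hiff x (hsub hx) y (mem_ball.2 hyd)).1 hy).symm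

lemma global_section (g : E → F → ℝ)
    (LC : ∀ xh : E, ∃ ρ : ℝ, 0 < ρ ∧ ∀ x ∈ ball xh ρ, ∀ y : F, gradient (g x) y = 0 →
      ∃ ψ : E → F, ContinuousOn ψ (ball xh ρ) ∧
        (∀ x' ∈ ball xh ρ, gradient (g x') (ψ x') = 0) ∧ ψ x = y)
    (SU : ∀ {U : Set E}, IsOpen U → IsPreconnected U →
      ∀ {u v : E → F}, ContinuousOn u U → ContinuousOn v U →
      (∀ x ∈ U, gradient (g x) (u x) = 0) → (∀ x ∈ U, gradient (g x) (v x) = 0) →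
      ∀ {x₀ : E}, x₀ ∈ U → u x₀ = v x₀ → ∀ x ∈ U, u x = v x)
    (x₀ : E) (y₀ : F) (h0 : gradient (g x₀) y₀ = 0) (x₁ : E) :
    ∃ U : Set E, IsOpen U ∧ Convex ℝ U ∧ x₀ ∈ U ∧ x₁ ∈ U ∧ ∃ s : E → F,
      ContinuousOn s U ∧ (∀ x ∈ U, gradient (g x) (s x) = 0) ∧ s x₀ = y₀ := by
  classical
  set d : E := x₁ - x₀ with hd
  set z : ℝ → E := fun t => x₀ + t • d with hz
  set T : ℝ → ℝ → Set E := fun t r => {p : E | ∃ u : ℝ, u ∈ Icc (0:ℝ) t ∧ dist p (z u) < r}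
    with hT
  have hTopen : ∀ t r, IsOpen (T t r) := by
    intro t r
    have : T t r = ⋃ u ∈ Icc (0:ℝ) t, ball (z u) r := by
      ext p
      simp only [hT, mem_setOf_eq, mem_iUnion₂, mem_ball]
      tauto
    rw [this]
    exact isOpen_biUnion fun _ _ => isOpen_ball
  have hzdiff : ∀ a b : ℝ, z a - z b = (a - b) • d := by
    intro a b
    simp only [hz]
    rw [sub_smul]
    abel
  have hzdist : ∀ a b : ℝ, dist (z a) (z b) = |a - b| * ‖d‖ := by
    intro a b
    rw [dist_eq_norm, hzdiff, norm_smul, Real.norm_eq_abs]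
  have hTconv : ∀ t r, Convex ℝ (T t r) := by
    intro t r
    rintro p ⟨u, hu, hpu⟩ q ⟨v, hv, hqv⟩ a b ha hb hab
    refine ⟨a * u + b * v, ⟨add_nonneg (mul_nonneg ha hu.1) (mul_nonneg hb hv.1), ?_⟩, ?_⟩
    · calc a * u + b * v ≤ a * t + b * t := by
            apply add_le_add (mul_le_mul_of_nonneg_left hu.2 ha)
              (mul_le_mul_of_nonneg_left hv.2 hb)
        _ = t := by rw [← add_mul, hab, one_mul]
    · have hzcomb : z (a * u + b * v) = a • z u + b • z v := by
        simp only [hz]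
        have hb' : b = 1 - a := by linarith
        subst hb'
        match_scalars <;> ring
      rw [hzcomb]
      calc dist (a • p + b • q) (a • z u + b • z v)
          ≤ dist (a • p) (a • z u) + dist (b • q) (b • z v) := dist_add_add_le _ _ _ _
        _ = a * dist p (z u) + b * dist q (z v) := by
            rw [dist_smul₀, dist_smul₀, Real.norm_eq_abs, Real.norm_eq_abs,
              abs_of_nonneg ha, abs_of_nonneg hb]
        _ < r := by
            rcases eq_or_lt_of_le ha with ha' | ha'
            · rw [← ha']; simp only [zero_mul, zero_add]
              have hb1 : b = 1 := by linarith
              rw [hb1, one_mul]; exact hqv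
            · have h1 : a * dist p (z u) < a * r := by
                exact (mul_lt_mul_iff_right₀ ha').2 hpu
              have h2 : b * dist q (z v) ≤ b * r :=
                mul_le_mul_of_nonneg_left hqv.le hb
              calc a * dist p (z u) + b * dist q (z v) < a * r + b * r := by linarith
                _ = r := by rw [← add_mul, hab, one_mul]
  have hx₀T : ∀ t r, 0 ≤ t → 0 < r → x₀ ∈ T t r := by
    intro t r ht hr
    refine ⟨0, ⟨le_refl 0, ht⟩, ?_⟩
    simp only [hz, zero_smul, add_zero, dist_self]
    exact hr
  have hztT : ∀ t r, 0 ≤ t → 0 < r → z t ∈ T t r := by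
    intro t r ht hr
    exact ⟨t, ⟨ht, le_refl t⟩, by rwa [dist_self]⟩
  set A : Set ℝ := {t | t ∈ Icc (0:ℝ) 1 ∧ ∃ r : ℝ, 0 < r ∧ ∃ s : E → F,
    ContinuousOn s (T t r) ∧ (∀ x ∈ T t r, gradient (g x) (s x) = 0) ∧ s x₀ = y₀} with hA
  -- 0 ∈ A
  have h0A : (0 : ℝ) ∈ A := by
    obtain ⟨ρ, hρpos, hcov⟩ := LC x₀
    obtain ⟨ψ, hψcont, hψsec, hψeq⟩ := hcov x₀ (mem_ball_self hρpos) y₀ h0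
    have hsub : T 0 ρ ⊆ ball x₀ ρ := by
      rintro p ⟨u, hu, hpu⟩
      have hu0 : u = 0 := le_antisymm hu.2 hu.1
      rw [hu0] at hpu
      simpa [hz] using hpu
    exact ⟨⟨le_refl 0, zero_le_one⟩, ρ, hρpos, ψ, hψcont.mono hsub,
      fun x hx => hψsec x (hsub hx), hψeq⟩
  have hbdd : BddAbove A := ⟨1, fun t ht => ht.1.2⟩
  have hAne : A.Nonempty := ⟨0, h0A⟩
  set tstar : ℝ := sSup A with htstar
  have h0le : 0 ≤ tstar := le_csSup hbdd h0A
  have hle1 : tstar ≤ 1 := csSup_le hAne fun t ht => ht.1.2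
  -- main claim : 1 ∈ A
  have h1A : (1 : ℝ) ∈ A := by
    by_cases hdz : d = 0
    · -- degenerate case : x₁ = x₀
      obtain ⟨h01, r, hr, s, hscont, hssec, hsx₀⟩ := h0A
      have hTeq : T 1 r = T 0 r := by
        ext p
        simp only [hT, mem_setOf_eq, hz, hdz, smul_zero, add_zero]
        constructor
        · rintro ⟨u, hu, hpu⟩; exact ⟨0, ⟨le_refl 0, le_refl 0⟩, hpu⟩
        · rintro ⟨u, hu, hpu⟩; exact ⟨0, ⟨le_refl 0, zero_le_one⟩, hpu⟩
      exact ⟨⟨zero_le_one, le_refl 1⟩, r, hr, s, by rwa [hTeq], by rwa [hTeq], hsx₀⟩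
    · have hL : 0 < ‖d‖ := norm_pos_iff.2 hdz
      set L : ℝ := ‖d‖ with hLdef
      obtain ⟨ρ, hρpos, hcov⟩ := LC (z tstar)
      set η : ℝ := ρ / (4 * L) with hη
      have hηpos : 0 < η := by positivity
      obtain ⟨t, htA, htgt⟩ := exists_lt_of_lt_csSup hAne (by linarith : tstar - η < sSup A)
      have htle : t ≤ tstar := le_csSup hbdd htA
      obtain ⟨ht01, r, hrpos, s, hscont, hssec, hsx₀⟩ := htA
      have hztd : dist (z t) (z tstar) < ρ / 4 := by
        rw [hzdist]
        have : |t - tstar| = tstar - t := by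
          rw [abs_sub_comm, abs_of_nonneg (by linarith)]
        rw [this]
        calc (tstar - t) * L < η * L := by
              apply (mul_lt_mul_iff_left₀ hL).2; linarith
          _ = ρ / 4 := by rw [hη]; field_simp
      have hztball : z t ∈ ball (z tstar) ρ := mem_ball.2 (by linarith)
      have hscrit : gradient (g (z t)) (s (z t)) = 0 :=
        hssec (z t) (hztT t r ht01.1 hrpos)
      obtain ⟨ψ, hψcont, hψsec, hψeq⟩ := hcov (z t) hztball (s (z t)) hscrit
      -- agreement on the intersection
      set Ω : Set E := T t r ∩ ball (z tstar) ρ with hΩ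
      have hΩopen : IsOpen Ω := (hTopen t r).inter isOpen_ball
      have hΩconv : Convex ℝ Ω := (hTconv t r).inter (convex_ball _ _)
      have hztΩ : z t ∈ Ω := ⟨hztT t r ht01.1 hrpos, hztball⟩
      have hagree : ∀ x ∈ Ω, s x = ψ x :=
        SU hΩopen hΩconv.isPreconnected
          (hscont.mono inter_subset_left) (hψcont.mono inter_subset_right)
          (fun x hx => hssec x hx.1) (fun x hx => hψsec x hx.2)
          hztΩ hψeq.symm
      set t'' : ℝ := min 1 (t + 2 * η) with ht''
      set r'' : ℝ := min r (ρ / 4) with hr''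
      have hr''pos : 0 < r'' := lt_min hrpos (by positivity)
      -- T t'' r'' ⊆ T t r ∪ ball (z tstar) ρ
      have hsub : T t'' r'' ⊆ T t r ∪ ball (z tstar) ρ := by
        rintro p ⟨u, hu, hpu⟩
        by_cases hut : u ≤ t
        · exact Or.inl ⟨u, ⟨hu.1, hut⟩, hpu.trans_le (min_le_left _ _)⟩
        · push_neg at hut
          right
          have hu2 : u ≤ t + 2 * η := hu.2.trans (min_le_right _ _)
          have habs : |u - tstar| ≤ 2 * η := by
            rw [abs_le]
            constructor <;> nlinarith
          have hzd : dist (z u) (z tstar) ≤ ρ / 2 := by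
            rw [hzdist]
            calc |u - tstar| * L ≤ 2 * η * L :=
                  mul_le_mul_of_nonneg_right habs hL.le
              _ = ρ / 2 := by rw [hη]; field_simp; ring
          rw [mem_ball]
          calc dist p (z tstar) ≤ dist p (z u) + dist (z u) (z tstar) := dist_triangle _ _ _
            _ < r'' + ρ / 2 := by linarith
            _ ≤ ρ / 4 + ρ / 2 := by
                have := min_le_right r (ρ / 4); linarith [min_le_right r (ρ/4)]
            _ < ρ := by linarith
      -- the glued section
      set s'' : E → F := fun x => if x ∈ ball (z tstar) ρ then ψ x else s x with hs''
      have hs''onT : ∀ x ∈ T t r, s'' x = s x := by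
        intro x hx
        by_cases hxb : x ∈ ball (z tstar) ρ
        · simp only [hs'', if_pos hxb]
          exact (hagree x ⟨hx, hxb⟩).symm
        · simp only [hs'', if_neg hxb]
      have hs''cont : ContinuousOn s'' (T t'' r'') := by
        intro x hx
        apply ContinuousAt.continuousWithinAt
        by_cases hxb : x ∈ ball (z tstar) ρ
        · have hψca : ContinuousAt ψ x := hψcont.continuousAt (isOpen_ball.mem_nhds hxb)
          apply hψca.congr
          filter_upwards [isOpen_ball.mem_nhds hxb] with x' hx'
          simp only [hs'', if_pos hx']
        · have hxT : x ∈ T t r := by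
            rcases hsub hx with h | h
            · exact h
            · exact absurd h hxb
          have hsca : ContinuousAt s x := hscont.continuousAt ((hTopen t r).mem_nhds hxT)
          apply hsca.congr
          filter_upwards [(hTopen t r).mem_nhds hxT] with x' hx'
          exact (hs''onT x' hx').symm
      have hs''sec : ∀ x ∈ T t'' r'', gradient (g x) (s'' x) = 0 := by
        intro x hx
        by_cases hxb : x ∈ ball (z tstar) ρ
        · simp only [hs'', if_pos hxb]
          exact hψsec x hxb
        · have hxT : x ∈ T t r := by
            rcases hsub hx with h | h
            · exact h
            · exact absurd h hxb
          simp only [hs'', if_neg hxb]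
          exact hssec x hxT
      have hs''x₀ : s'' x₀ = y₀ := by
        rw [hs''onT x₀ (hx₀T t r ht01.1 hrpos)]
        exact hsx₀
      have ht''A : t'' ∈ A := by
        refine ⟨⟨le_min zero_le_one (by linarith), min_le_left _ _⟩,
          r'', hr''pos, s'', hs''cont, hs''sec, hs''x₀⟩
      have ht''le : t'' ≤ tstar := le_csSup hbdd ht''A
      have htstar1 : tstar = 1 := by
        by_contra hne
        have hlt : tstar < 1 := lt_of_le_of_ne hle1 hne
        have : tstar < t'' := lt_min hlt (by linarith)
        linarith
      have ht''1 : t'' = 1 := by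
        rw [ht'']
        apply min_eq_left
        linarith
      rwa [ht''1] at ht''A
  -- conclude
  obtain ⟨h01, r, hr, s, hscont, hssec, hsx₀⟩ := h1A
  refine ⟨T 1 r, hTopen 1 r, hTconv 1 r, hx₀T 1 r zero_le_one hr, ?_, s, hscont, hssec, hsx₀⟩
  have : z 1 = x₁ := by
    simp only [hz, one_smul, hd]
    abel
  rw [← this]
  exact hztT 1 r zero_le_one hr

end CriticalBranchesAux

/-- Under the parametric Morse qualification condition (with uniformly bounded
cardinality of the critical sets), the critical set of `g(x,·)` has constant
finite cardinality `M`, and its graph is partitioned by the graphs of `M`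
globally defined `C¹` branches with pairwise distinct values. -/
theorem critical_branches_structure
    {n m : ℕ} (g : EuclideanSpace ℝ (Fin n) → EuclideanSpace ℝ (Fin m) → ℝ)
    (hg : ContDiff ℝ 2 (fun p : EuclideanSpace ℝ (Fin n) × EuclideanSpace ℝ (Fin m) => g p.1 p.2))
    (hMorse : ∀ x y, gradient (g x) y = 0 →
      ∃ e : EuclideanSpace ℝ (Fin m) ≃L[ℝ] EuclideanSpace ℝ (Fin m),
        (e : EuclideanSpace ℝ (Fin m) →L[ℝ] EuclideanSpace ℝ (Fin m))
          = fderiv ℝ (gradient (g x)) y)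
    (hnonempty : ∀ x, ∃ y, gradient (g x) y = 0)
    (hlocbdd : ∀ x, ∃ U ∈ nhds x, ∃ C : ℝ,
      ∀ x' ∈ U, ∀ y, gradient (g x') y = 0 → ‖y‖ ≤ C)
    (B : ℕ)
    (hcard : ∀ x, {y | gradient (g x) y = 0}.Finite ∧
      {y | gradient (g x) y = 0}.ncard ≤ B) :
    ∃ (M : ℕ) (Y : Fin M → EuclideanSpace ℝ (Fin n) → EuclideanSpace ℝ (Fin m)),
      (∀ i, ContDiff ℝ 1 (Y i)) ∧
      (∀ x, ∀ i j, i ≠ j → Y i x ≠ Y j x) ∧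
      (∀ x, {y | gradient (g x) y = 0} = Set.range (fun i => Y i x)) := by
  classical
  have hG : ContDiff ℝ 1
      (fun p : EuclideanSpace ℝ (Fin n) × EuclideanSpace ℝ (Fin m) => gradient (g p.1) p.2) :=
    CriticalBranchesAux.contDiff_grad g hg
  have hfin : ∀ x, {y | gradient (g x) y = 0}.Finite := fun x => (hcard x).1
  have LC := CriticalBranchesAux.local_cover g hG hMorse hlocbdd hfin
  have SU : ∀ {U : Set (EuclideanSpace ℝ (Fin n))}, IsOpen U → IsPreconnected U →
      ∀ {u v : EuclideanSpace ℝ (Fin n) → EuclideanSpace ℝ (Fin m)},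
      ContinuousOn u U → ContinuousOn v U →
      (∀ x ∈ U, gradient (g x) (u x) = 0) → (∀ x ∈ U, gradient (g x) (v x) = 0) →
      ∀ {x₀ : EuclideanSpace ℝ (Fin n)}, x₀ ∈ U → u x₀ = v x₀ → ∀ x ∈ U, u x = v x :=
    fun {U} hU hUc {u v} hu hv hsu hsv {x₀} hx₀ hxy =>
      CriticalBranchesAux.section_unique g hG hMorse hU hUc hu hv hsu hsv hx₀ hxy
  have GS := CriticalBranchesAux.global_section g LC SU
  set Pred : EuclideanSpace ℝ (Fin m) → EuclideanSpace ℝ (Fin n) → EuclideanSpace ℝ (Fin m)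
      → Prop := fun y₀ x y =>
    ∃ U : Set (EuclideanSpace ℝ (Fin n)), IsOpen U ∧ Convex ℝ U ∧
      (0 : EuclideanSpace ℝ (Fin n)) ∈ U ∧ x ∈ U ∧
      ∃ s : EuclideanSpace ℝ (Fin n) → EuclideanSpace ℝ (Fin m), ContinuousOn s U ∧
        (∀ x' ∈ U, gradient (g x') (s x') = 0) ∧ s 0 = y₀ ∧ s x = y with hPred
  have huniq : ∀ y₀ x y y', Pred y₀ x y → Pred y₀ x y' → y = y' := by
    rintro y₀ x y y' ⟨U, hUo, hUc, hU0, hUx, s, hsc, hss, hs0, hsx⟩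
      ⟨V, hVo, hVc, hV0, hVx, s', hsc', hss', hs0', hsx'⟩
    have hW : IsOpen (U ∩ V) := hUo.inter hVo
    have hWc : Convex ℝ (U ∩ V) := hUc.inter hVc
    have h := CriticalBranchesAux.section_unique g hG hMorse hW hWc.isPreconnected
      (hsc.mono inter_subset_left) (hsc'.mono inter_subset_right)
      (fun x' hx' => hss x' hx'.1) (fun x' hx' => hss' x' hx'.2)
      (⟨hU0, hV0⟩ : (0 : EuclideanSpace ℝ (Fin n)) ∈ U ∩ V) (hs0.trans hs0'.symm)
    rw [← hsx, ← hsx']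
    exact h x ⟨hUx, hVx⟩
  have hex : ∀ y₀, gradient (g 0) y₀ = 0 → ∀ x, ∃ y, Pred y₀ x y := by
    intro y₀ h0 x
    obtain ⟨U, hUo, hUc, hU0, hUx, s, hsc, hss, hs0⟩ := GS 0 y₀ h0 x
    exact ⟨s x, U, hUo, hUc, hU0, hUx, s, hsc, hss, hs0, rfl⟩
  set Ysec : EuclideanSpace ℝ (Fin m) → EuclideanSpace ℝ (Fin n) → EuclideanSpace ℝ (Fin m) :=
    fun y₀ x => Classical.epsilon (Pred y₀ x) with hYsec
  have hYspec : ∀ y₀, gradient (g 0) y₀ = 0 → ∀ x, Pred y₀ x (Ysec y₀ x) := by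
    intro y₀ h0 x
    exact Classical.epsilon_spec (hex y₀ h0 x)
  -- coherence with any witness
  have hco : ∀ y₀, gradient (g 0) y₀ = 0 → ∀ (U : Set (EuclideanSpace ℝ (Fin n)))
      (s : EuclideanSpace ℝ (Fin n) → EuclideanSpace ℝ (Fin m)),
      IsOpen U → Convex ℝ U → (0 : EuclideanSpace ℝ (Fin n)) ∈ U → ContinuousOn s U →
      (∀ x' ∈ U, gradient (g x') (s x') = 0) → s 0 = y₀ →
      ∀ x ∈ U, Ysec y₀ x = s x := by
    intro y₀ h0 U s hUo hUc hU0 hsc hss hs0 x hx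
    exact huniq y₀ x _ _ (hYspec y₀ h0 x) ⟨U, hUo, hUc, hU0, hx, s, hsc, hss, hs0, rfl⟩
  have hYcrit : ∀ y₀, gradient (g 0) y₀ = 0 → ∀ x, gradient (g x) (Ysec y₀ x) = 0 := by
    intro y₀ h0 x
    obtain ⟨U, hUo, hUc, hU0, hUx, s, hsc, hss, hs0, hsx⟩ := hYspec y₀ h0 x
    rw [← hsx]
    exact hss x hUx
  have hY0 : ∀ y₀, gradient (g 0) y₀ = 0 → Ysec y₀ 0 = y₀ := by
    intro y₀ h0
    obtain ⟨U, hUo, hUc, hU0, hUx, s, hsc, hss, hs0, hsx⟩ := hYspec y₀ h0 0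
    rw [← hsx]
    exact hs0
  have hYsmooth : ∀ y₀, gradient (g 0) y₀ = 0 → ContDiff ℝ 1 (Ysec y₀) := by
    intro y₀ h0
    rw [contDiff_iff_contDiffAt]
    intro x
    obtain ⟨U, hUo, hUc, hU0, hUx, s, hsc, hss, hs0, hsx⟩ := hYspec y₀ h0 x
    have heq : ∀ x' ∈ U, Ysec y₀ x' = s x' := hco y₀ h0 U s hUo hUc hU0 hsc hss hs0
    have hYc : ContinuousOn (Ysec y₀) U := hsc.congr heq
    have hYs : ∀ x' ∈ U, gradient (g x') (Ysec y₀ x') = 0 := by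
      intro x' hx'
      rw [heq x' hx']
      exact hss x' hx'
    exact CriticalBranchesAux.section_contDiffAt g hG hMorse hUo hYc hYs hUx
  have hYdist : ∀ y₀ y₁, gradient (g 0) y₀ = 0 → gradient (g 0) y₁ = 0 → y₀ ≠ y₁ →
      ∀ x, Ysec y₀ x ≠ Ysec y₁ x := by
    intro y₀ y₁ h0 h1 hne x hcontra
    obtain ⟨U, hUo, hUc, hU0, hUx, s, hsc, hss, hs0, hsx⟩ := hYspec y₀ h0 x
    obtain ⟨V, hVo, hVc, hV0, hVx, s', hsc', hss', hs0', hsx'⟩ := hYspec y₁ h1 x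
    have hW : IsOpen (U ∩ V) := hUo.inter hVo
    have hWc : Convex ℝ (U ∩ V) := hUc.inter hVc
    have h := CriticalBranchesAux.section_unique g hG hMorse hW hWc.isPreconnected
      (hsc.mono inter_subset_left) (hsc'.mono inter_subset_right)
      (fun x' hx' => hss x' hx'.1) (fun x' hx' => hss' x' hx'.2)
      (⟨hUx, hVx⟩ : x ∈ U ∩ V) (by rw [hsx, hsx']; exact hcontra)
    have := h 0 ⟨hU0, hV0⟩
    rw [hs0, hs0'] at this
    exact hne this
  -- surjectivity
  have hsurj : ∀ x y, gradient (g x) y = 0 → ∃ y₀, gradient (g 0) y₀ = 0 ∧ Ysec y₀ x = y := by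
    intro x y hy
    obtain ⟨U, hUo, hUc, hUx, hU0, s, hsc, hss, hsx⟩ := GS x y hy 0
    refine ⟨s 0, hss 0 hU0, ?_⟩
    exact (huniq (s 0) x _ _ (hYspec (s 0) (hss 0 hU0) x)
      ⟨U, hUo, hUc, hU0, hUx, s, hsc, hss, rfl, hsx⟩)
  -- index the critical set of g 0
  set S0 : Set (EuclideanSpace ℝ (Fin m)) := {y | gradient (g 0) y = 0} with hS0
  have hS0fin : S0.Finite := (hcard 0).1
  set Fs : Finset (EuclideanSpace ℝ (Fin m)) := hS0fin.toFinset with hFs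
  refine ⟨Fs.card, fun i => Ysec ((Fs.equivFin.symm i : Fs) : EuclideanSpace ℝ (Fin m)), ?_, ?_, ?_⟩
  · intro i
    have hmem : ((Fs.equivFin.symm i : Fs) : EuclideanSpace ℝ (Fin m)) ∈ S0 :=
      hS0fin.mem_toFinset.1 (Fs.equivFin.symm i).2
    exact hYsmooth _ hmem
  · intro x i j hij
    have hmi : ((Fs.equivFin.symm i : Fs) : EuclideanSpace ℝ (Fin m)) ∈ S0 :=
      hS0fin.mem_toFinset.1 (Fs.equivFin.symm i).2
    have hmj : ((Fs.equivFin.symm j : Fs) : EuclideanSpace ℝ (Fin m)) ∈ S0 :=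
      hS0fin.mem_toFinset.1 (Fs.equivFin.symm j).2
    apply hYdist _ _ hmi hmj
    intro heq
    apply hij
    have := Subtype.coe_injective heq
    exact Fs.equivFin.symm.injective this
  · intro x
    ext y
    simp only [Set.mem_setOf_eq, Set.mem_range]
    constructor
    · intro hy
      obtain ⟨y₀, h0, hYy⟩ := hsurj x y hy
      have hy₀Fs : y₀ ∈ Fs := hS0fin.mem_toFinset.2 h0
      refine ⟨Fs.equivFin ⟨y₀, hy₀Fs⟩, ?_⟩
      rw [Equiv.symm_apply_apply]
      exact hYy
    · rintro ⟨i, rfl⟩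
      exact hYcrit _ (hS0fin.mem_toFinset.1 (Fs.equivFin.symm i).2) x
end

section
/- Let g : ℝⁿ × ℝᵐ → ℝ be C^k (k ≥ 2) with g(x,·) Morse for all x, and the critical set map x ↦ crit g(x,·) nonempty and locally bounded. Given (x̄, ȳ) with ∇_y g(x̄, ȳ) = 0, there exists a unique globally defined C^{k-1} function y : ℝⁿ → ℝᵐ such that ∇_y g(x, y(x)) = 0 for all x ∈ ℝⁿ and y(x̄) = ȳ. -/
open Metric Set Filter Topology InnerProductSpace ContinuousLinearMap

abbrev Esp (N : ℕ) : Type := EuclideanSpace ℝ (Fin N)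

variable {n m : ℕ}

theorem contDiff_grad {k : ℕ} (hk : 2 ≤ k)
    {g : Esp n → Esp m → ℝ}
    (hg : ContDiff ℝ k (fun p : Esp n × Esp m => g p.1 p.2)) :
    ContDiff ℝ (k - 1 : ℕ)
      (fun p : Esp n × Esp m => gradient (g p.1) p.2) := by
  have h1 : ((k - 1 : ℕ) : WithTop ℕ∞) + 1 ≤ (k : WithTop ℕ∞) := by
    have : k - 1 + 1 = k := Nat.succ_pred_eq_of_pos (Nat.lt_of_lt_of_le Nat.zero_lt_two hk)
    exact_mod_cast this.le
  have hfd : ContDiff ℝ (k - 1 : ℕ)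
      (fun p : Esp n × Esp m => fderiv ℝ (g p.1) p.2) := by
    apply ContDiff.fderiv (f := fun (p : Esp n × Esp m) y => g p.1 y)
      (g := Prod.snd) ?_ contDiff_snd h1
    exact hg.comp (contDiff_fst.fst.prodMk contDiff_snd)
  have : ContDiff ℝ (k-1:ℕ) (fun w : (Esp m →L[ℝ] ℝ) =>
      (toDual ℝ (Esp m)).symm w) :=
    (toDual ℝ (Esp m)).symm.toContinuousLinearEquiv.contDiff
  exact this.comp hfd

theorem local_branch {k : ℕ} (hk : 2 ≤ k)
    {g : Esp n → Esp m → ℝ}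
    (hΦ : ContDiff ℝ (k - 1 : ℕ) (fun p : Esp n × Esp m => gradient (g p.1) p.2))
    (hMorse : ∀ x y, gradient (g x) y = 0 →
      ∃ e : Esp m ≃L[ℝ] Esp m,
        (e : Esp m →L[ℝ] Esp m) = fderiv ℝ (gradient (g x)) y)
    (x₀ : Esp n) (y₀ : Esp m)
    (h0 : gradient (g x₀) y₀ = 0) :
    ∃ ε > 0, ∃ φ : Esp n → Esp m,
      ∃ W ∈ 𝓝 (x₀, y₀),
      ContDiffOn ℝ (k - 1 : ℕ) φ (ball x₀ ε) ∧ φ x₀ = y₀ ∧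
      (∀ x ∈ ball x₀ ε, gradient (g x) (φ x) = 0) ∧
      (∀ p : Esp n × Esp m, p ∈ W →
        gradient (g p.1) p.2 = 0 → p.1 ∈ ball x₀ ε ∧ p.2 = φ p.1) := by
  have hk1 : (1 : WithTop ℕ∞) ≤ ((k - 1 : ℕ) : WithTop ℕ∞) := by
    have : (1 : ℕ) ≤ k - 1 := Nat.le_sub_one_of_lt (lt_of_lt_of_le one_lt_two hk)
    exact_mod_cast this
  have hk1' : ((k - 1 : ℕ) : WithTop ℕ∞) ≠ 0 := ne_of_gt (lt_of_lt_of_le zero_lt_one hk1)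
  set Φ : Esp n × Esp m → Esp m := fun p => gradient (g p.1) p.2 with hΦdef
  set H : Esp n × Esp m → Esp n × Esp m := fun p => (p.1, Φ p) with hHdef
  have CH : ContDiff ℝ (k - 1 : ℕ) H := contDiff_fst.prodMk hΦ
  set DΨ := fderiv ℝ Φ (x₀, y₀) with hDΨ
  have hdΨ : HasFDerivAt Φ DΨ (x₀, y₀) :=
    ((hΦ.differentiable hk1') (x₀, y₀)).hasFDerivAt
  have hDH : HasFDerivAt H ((ContinuousLinearMap.fst ℝ (Esp n) (Esp m)).prod DΨ) (x₀, y₀) :=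
    (hasFDerivAt_fst).prodMk hdΨ
  obtain ⟨e, he⟩ := hMorse x₀ y₀ h0
  have hpart : HasFDerivAt (gradient (g x₀)) (DΨ.comp (inr ℝ (Esp n) (Esp m))) y₀ := by
    have h1 := hdΨ.comp y₀ (hasFDerivAt_prodMk_right x₀ y₀)
    exact h1
  have he2 : (e : Esp m →L[ℝ] Esp m) = DΨ.comp (inr ℝ (Esp n) (Esp m)) := by
    rw [he]; exact hpart.fderiv
  set A : Esp n →L[ℝ] Esp m := DΨ.comp (inl ℝ (Esp n) (Esp m)) with hA
  have key : ∀ p : Esp n × Esp m, DΨ p = A p.1 + e p.2 := by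
    intro p
    have hp : ((p.1, 0) : Esp n × Esp m) + ((0 : Esp n), p.2) = p := by simp
    have h4 : DΨ p = DΨ (p.1, 0) + DΨ (0, p.2) := by rw [← map_add, hp]
    rw [h4]
    have h2 : e p.2 = DΨ (0, p.2) := by rw [← ContinuousLinearEquiv.coe_coe, he2]; rfl
    rw [h2]; rfl
  set T₁ : Esp n × Esp m →L[ℝ] Esp n × Esp m :=
    (ContinuousLinearMap.fst ℝ (Esp n) (Esp m)).prod DΨ with hT₁
  set T₂ : Esp n × Esp m →L[ℝ] Esp n × Esp m :=
    (ContinuousLinearMap.fst ℝ (Esp n) (Esp m)).prod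
      ((e.symm : Esp m →L[ℝ] Esp m).comp
        ((ContinuousLinearMap.snd ℝ (Esp n) (Esp m)) -
          A.comp (ContinuousLinearMap.fst ℝ (Esp n) (Esp m)))) with hT₂
  have hinv1 : Function.LeftInverse T₂ T₁ := by
    intro p
    have h5 : T₂ (T₁ p) = (p.1, e.symm (DΨ p - A p.1)) := rfl
    rw [h5, key p]
    simp
  have hinv2 : Function.RightInverse T₂ T₁ := by
    intro q
    have h5 : T₁ (T₂ q) = (q.1, DΨ (q.1, e.symm (q.2 - A q.1))) := rfl
    rw [h5, key (q.1, e.symm (q.2 - A q.1))]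
    simp
  set e' : (Esp n × Esp m) ≃L[ℝ] (Esp n × Esp m) :=
    ContinuousLinearEquiv.equivOfInverse T₁ T₂ hinv1 hinv2 with he'
  have he'c : (e' : Esp n × Esp m →L[ℝ] Esp n × Esp m) = T₁ := rfl
  have hDH' : HasFDerivAt H (e' : Esp n × Esp m →L[ℝ] Esp n × Esp m) (x₀, y₀) := by
    rw [he'c]; exact hDH
  have hCA : ContDiffAt ℝ (k - 1 : ℕ) H (x₀, y₀) := CH.contDiffAt
  set P := hCA.toOpenPartialHomeomorph H hDH' hk1' with hP
  set ψ := hCA.localInverse hDH' hk1' with hψ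
  have hψP : ψ = P.symm := by
    rw [hψ, hP]
    exact (hCA.hasStrictFDerivAt' hDH' hk1').localInverse_def
  have hHval : H (x₀, y₀) = (x₀, 0) := by
    show (x₀, Φ (x₀, y₀)) = (x₀, 0)
    rw [show Φ (x₀, y₀) = 0 from h0]
  have hψsmooth : ContDiffAt ℝ (k - 1 : ℕ) ψ (x₀, 0) := by
    rw [← hHval]; exact hCA.to_localInverse hDH' hk1'
  set φ : Esp n → Esp m := fun x => (ψ (x, 0)).2 with hφdef
  have hφsmooth : ContDiffAt ℝ (k - 1 : ℕ) φ x₀ := by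
    apply ContDiffAt.comp
    · exact contDiffAt_snd
    · exact hψsmooth.comp x₀ (contDiff_prodMk_left (0 : Esp m)).contDiffAt
  have hmemsrc : (x₀, y₀) ∈ P.source := hCA.mem_toOpenPartialHomeomorph_source hDH' hk1'
  have hmemtgt : ((x₀, 0) : Esp n × Esp m) ∈ P.target := by
    rw [← hHval]; exact hCA.image_mem_toOpenPartialHomeomorph_target hDH' hk1'
  have hPcoe : (P : Esp n × Esp m → Esp n × Esp m) = H := rfl
  obtain ⟨u, hu, hucd⟩ : ∃ u ∈ 𝓝 x₀, ContDiffOn ℝ (k - 1 : ℕ) φ u := by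
    have h := hφsmooth
    rw [← contDiffWithinAt_univ] at h
    rcases (contDiffWithinAt_iff_contDiffOn_nhds (by simp)).1 h with ⟨u, hu, hcd⟩
    refine ⟨u, by simpa using hu, hcd⟩
  have hTopen : IsOpen {x : Esp n | ((x, (0 : Esp m)) : Esp n × Esp m) ∈ P.target} :=
    P.open_target.preimage (Continuous.prodMk_left 0)
  have hmem : {x : Esp n | ((x, (0 : Esp m)) : Esp n × Esp m) ∈ P.target} ∩ u ∈ 𝓝 x₀ :=
    inter_mem (hTopen.mem_nhds hmemtgt) hu
  obtain ⟨ε, hε, hball⟩ := Metric.mem_nhds_iff.1 hmem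
  refine ⟨ε, hε, φ, P.source ∩ {p | p.1 ∈ ball x₀ ε}, ?_, ?_, ?_, ?_, ?_⟩
  · exact inter_mem (P.open_source.mem_nhds hmemsrc)
      ((isOpen_ball.preimage continuous_fst).mem_nhds (mem_ball_self hε))
  · exact hucd.mono (fun x hx => (hball hx).2)
  · have h6 : ψ (x₀, 0) = (x₀, y₀) := by
      rw [← hHval]; exact hCA.localInverse_apply_image hDH' hk1'
    rw [hφdef]; simp only [h6]
  · intro x hx
    have hxt : ((x, (0 : Esp m)) : Esp n × Esp m) ∈ P.target := (hball hx).1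
    have h1 : P (P.symm (x, 0)) = (x, 0) := P.right_inv hxt
    rw [hPcoe] at h1
    have h2 : (P.symm ((x, 0) : Esp n × Esp m)).1 = x := congrArg Prod.fst h1
    have h3 : Φ (P.symm ((x, 0) : Esp n × Esp m)) = 0 := congrArg Prod.snd h1
    have hφx : φ x = (P.symm ((x, 0) : Esp n × Esp m)).2 := by rw [hφdef]; simp [hψP]
    show Φ (x, φ x) = 0
    have h8 : ((x, φ x) : Esp n × Esp m) = P.symm ((x, 0) : Esp n × Esp m) :=
      Prod.ext h2.symm hφx.symm
    rw [h8]; exact h3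
  · rintro p ⟨hps, hpb⟩ hcrit
    refine ⟨hpb, ?_⟩
    have h1 : P.symm (P p) = p := P.left_inv hps
    have hHp : H p = (p.1, 0) := by
      show (p.1, Φ p) = (p.1, 0)
      rw [show Φ p = 0 from hcrit]
    rw [hPcoe, hHp] at h1
    have h7 : φ p.1 = (P.symm ((p.1, 0) : Esp n × Esp m)).2 := by rw [hφdef]; simp [hψP]
    rw [h7, h1]

theorem branch_eqOn {k : ℕ} (hk : 2 ≤ k)
    {g : Esp n → Esp m → ℝ}
    (hΦ : ContDiff ℝ (k - 1 : ℕ) (fun p : Esp n × Esp m => gradient (g p.1) p.2))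
    (hMorse : ∀ x y, gradient (g x) y = 0 →
      ∃ e : Esp m ≃L[ℝ] Esp m,
        (e : Esp m →L[ℝ] Esp m) = fderiv ℝ (gradient (g x)) y)
    {s : Set (Esp n)} (hso : IsOpen s) (hsc : IsPreconnected s)
    {y₁ y₂ : Esp n → Esp m} (h₁ : ContinuousOn y₁ s) (h₂ : ContinuousOn y₂ s)
    (hc₁ : ∀ x ∈ s, gradient (g x) (y₁ x) = 0)
    (hc₂ : ∀ x ∈ s, gradient (g x) (y₂ x) = 0)
    {xs : Esp n} (hxs : xs ∈ s) (hagree : y₁ xs = y₂ xs) : EqOn y₁ y₂ s := by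
  set t : Set (Esp n) := {x | x ∈ s ∧ y₁ x = y₂ x} with ht
  set v : Set (Esp n) := {x | x ∈ s ∧ y₁ x ≠ y₂ x} with hv
  have hto : IsOpen t := by
    rw [isOpen_iff_mem_nhds]
    rintro x₀ ⟨hx₀s, hx₀e⟩
    obtain ⟨ε, hε, φ, W, hW, _, _, _, hWuniq⟩ :=
      local_branch hk hΦ hMorse x₀ (y₁ x₀) (hc₁ x₀ hx₀s)
    have hcy₁ : ContinuousAt (fun x => ((x, y₁ x) : Esp n × Esp m)) x₀ :=
      continuousAt_id.prodMk (h₁.continuousAt (hso.mem_nhds hx₀s))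
    have hcy₂ : ContinuousAt (fun x => ((x, y₂ x) : Esp n × Esp m)) x₀ := by
      refine continuousAt_id.prodMk (h₂.continuousAt (hso.mem_nhds hx₀s))
    have hW₂ : W ∈ 𝓝 ((x₀, y₂ x₀) : Esp n × Esp m) := by rw [← hx₀e]; exact hW
    have hN : {x | (x, y₁ x) ∈ W} ∩ ({x | (x, y₂ x) ∈ W} ∩ s) ∈ 𝓝 x₀ :=
      inter_mem (hcy₁.preimage_mem_nhds hW)
        (inter_mem (hcy₂.preimage_mem_nhds hW₂) (hso.mem_nhds hx₀s))
    refine mem_of_superset hN ?_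
    rintro x ⟨hx1, hx2, hxss⟩
    have e1 := (hWuniq (x, y₁ x) hx1 (hc₁ x hxss)).2
    have e2 := (hWuniq (x, y₂ x) hx2 (hc₂ x hxss)).2
    exact ⟨hxss, by simpa using e1.trans e2.symm⟩
  have hvo : IsOpen v := by
    rw [isOpen_iff_mem_nhds]
    rintro x₀ ⟨hx₀s, hx₀e⟩
    have hc : ContinuousAt (fun x => ((y₁ x, y₂ x) : Esp m × Esp m)) x₀ :=
      (h₁.continuousAt (hso.mem_nhds hx₀s)).prodMk (h₂.continuousAt (hso.mem_nhds hx₀s))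
    have hd : IsOpen {p : Esp m × Esp m | p.1 ≠ p.2} := isOpen_ne_fun continuous_fst continuous_snd
    have hN : {x | y₁ x ≠ y₂ x} ∩ s ∈ 𝓝 x₀ :=
      inter_mem (hc.preimage_mem_nhds (hd.mem_nhds hx₀e)) (hso.mem_nhds hx₀s)
    exact mem_of_superset hN (fun x hx => ⟨hx.2, hx.1⟩)
  intro x hx
  by_contra hne
  obtain ⟨z, hzs, hzt, hzv⟩ : (s ∩ (t ∩ v)).Nonempty := by
    refine hsc t v hto hvo ?_ ⟨xs, hxs, hxs, hagree⟩ ⟨x, hx, hx, hne⟩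
    intro w hw
    by_cases hwe : y₁ w = y₂ w
    · exact Or.inl ⟨hw, hwe⟩
    · exact Or.inr ⟨hw, hwe⟩
  exact hzv.2 hzt.2

theorem evenly_covered {k : ℕ} (hk : 2 ≤ k)
    {g : Esp n → Esp m → ℝ}
    (hΦ : ContDiff ℝ (k - 1 : ℕ) (fun p : Esp n × Esp m => gradient (g p.1) p.2))
    (hMorse : ∀ x y, gradient (g x) y = 0 →
      ∃ e : Esp m ≃L[ℝ] Esp m,
        (e : Esp m →L[ℝ] Esp m) = fderiv ℝ (gradient (g x)) y)
    (hlocbdd : ∀ x, ∃ U ∈ nhds x, ∃ C : ℝ,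
      ∀ x' ∈ U, ∀ y, gradient (g x') y = 0 → ‖y‖ ≤ C)
    (x₀ : Esp n) :
    ∃ δ > 0, ∀ x₁ ∈ ball x₀ δ, ∀ y₁ : Esp m, gradient (g x₁) y₁ = 0 →
      ∃ φ : Esp n → Esp m, ContDiffOn ℝ (k - 1 : ℕ) φ (ball x₀ δ) ∧
        (∀ x ∈ ball x₀ δ, gradient (g x) (φ x) = 0) ∧ φ x₁ = y₁ := by
  classical
  have Φcont : Continuous (fun p : Esp n × Esp m => gradient (g p.1) p.2) := hΦ.continuous
  -- totalized local branch data
  have hL : ∀ q : Esp n × Esp m, ∃ ε : ℝ, ∃ φ : Esp n → Esp m, ∃ W : Set (Esp n × Esp m),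
      0 < ε ∧ W ∈ 𝓝 q ∧ (gradient (g q.1) q.2 = 0 →
        (ContDiffOn ℝ (k - 1 : ℕ) φ (ball q.1 ε) ∧
         (∀ x ∈ ball q.1 ε, gradient (g x) (φ x) = 0) ∧
         (∀ p : Esp n × Esp m, p ∈ W →
           gradient (g p.1) p.2 = 0 → p.1 ∈ ball q.1 ε ∧ p.2 = φ p.1))) := by
    intro q
    by_cases hq : gradient (g q.1) q.2 = 0
    · obtain ⟨ε, hε, φ, W, hW, hcd, _, hcrit, huniq⟩ := local_branch hk hΦ hMorse q.1 q.2 hq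
      exact ⟨ε, φ, W, hε, hW, fun _ => ⟨hcd, hcrit, huniq⟩⟩
    · exact ⟨1, fun _ => 0, univ, one_pos, univ_mem, fun h => absurd h hq⟩
  choose ε φf W hε hW hprop using hL
  obtain ⟨U, hU, C, hC⟩ := hlocbdd x₀
  set F₀ : Set (Esp m) := {y | gradient (g x₀) y = 0} with hF₀
  have hF₀c : IsClosed F₀ := by
    have : Continuous (fun y : Esp m => gradient (g x₀) y) :=
      Φcont.comp (Continuous.prodMk_right x₀)
    exact isClosed_singleton.preimage this
  have hF₀b : F₀ ⊆ closedBall 0 C := by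
    intro y hy
    rw [mem_closedBall_zero_iff]
    exact hC x₀ (mem_of_mem_nhds hU) y hy
  have hF₀cp : IsCompact F₀ := (isCompact_closedBall 0 C).of_isClosed_subset hF₀c hF₀b
  set V : Esp m → Set (Esp m) := fun y =>
    if gradient (g x₀) y = 0 then {y' | ((x₀, y') : Esp n × Esp m) ∈ interior (W (x₀, y))}
    else ∅ with hV
  have hVopen : ∀ y, IsOpen (V y) := by
    intro y
    by_cases h : gradient (g x₀) y = 0
    · simp only [hV, if_pos h]
      exact isOpen_interior.preimage (Continuous.prodMk_right x₀)
    · simp only [hV, if_neg h]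
      exact isOpen_empty
  have hVcov : F₀ ⊆ ⋃ y, V y := by
    intro y hy
    refine mem_iUnion.2 ⟨y, ?_⟩
    have hy' : gradient (g x₀) y = 0 := hy
    simp only [hV, if_pos hy']
    exact mem_interior_iff_mem_nhds.2 (hW (x₀, y))
  obtain ⟨t, htcov⟩ := hF₀cp.elim_finite_subcover V hVopen hVcov
  -- step: uniform even covering radius δ₁
  obtain ⟨r, hr, hrU⟩ := Metric.mem_nhds_iff.1 hU
  have hδ₁ : ∃ δ₁ > 0, ∀ x₁ ∈ ball x₀ δ₁, ∀ y₁ : Esp m, gradient (g x₁) y₁ = 0 →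
      ∃ y ∈ t, gradient (g x₀) y = 0 ∧ ((x₁, y₁) : Esp n × Esp m) ∈ W (x₀, y) := by
    by_contra hcon
    push_neg at hcon
    have hstep : ∀ j : ℕ, ∃ x₁ ∈ ball x₀ (min r (1 / (j + 1))), ∃ y₁ : Esp m,
        gradient (g x₁) y₁ = 0 ∧ ∀ y ∈ t, ¬(gradient (g x₀) y = 0 ∧
          ((x₁, y₁) : Esp n × Esp m) ∈ W (x₀, y)) := by
      intro j
      obtain ⟨x₁, hx₁, y₁, hy₁, hbad⟩ := hcon (min r (1 / (j + 1)))
        (lt_min hr (by positivity))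
      refine ⟨x₁, hx₁, y₁, hy₁, ?_⟩
      intro y hyt ⟨hygrad, hymem⟩
      exact hbad y hyt hygrad hymem
    choose xseq hxseq yseq hcrit hnot using hstep
    have hxconv : Tendsto xseq atTop (𝓝 x₀) := by
      rw [tendsto_iff_dist_tendsto_zero]
      apply squeeze_zero (fun j => dist_nonneg)
        (fun j => (le_of_lt (lt_of_lt_of_le (mem_ball.1 (hxseq j)) (min_le_right _ _))))
      exact tendsto_one_div_add_atTop_nhds_zero_nat
    have hybdd : ∀ j, yseq j ∈ closedBall (0 : Esp m) C := by
      intro j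
      rw [mem_closedBall_zero_iff]
      refine hC (xseq j) (hrU ?_) (yseq j) (hcrit j)
      exact mem_ball.2 (lt_of_lt_of_le (mem_ball.1 (hxseq j)) (min_le_left _ _))
    obtain ⟨ystar, hystar, σ, hσ, hyconv⟩ := (isCompact_closedBall (0 : Esp m) C).tendsto_subseq hybdd
    have hpconv : Tendsto (fun j => ((xseq (σ j), yseq (σ j)) : Esp n × Esp m)) atTop
        (𝓝 (x₀, ystar)) :=
      (hxconv.comp hσ.tendsto_atTop).prodMk_nhds hyconv
    have hystarcrit : gradient (g x₀) ystar = 0 := by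
      have h1 : Tendsto (fun j => gradient (g (xseq (σ j))) (yseq (σ j))) atTop
          (𝓝 (gradient (g x₀) ystar)) := (Φcont.continuousAt.tendsto).comp hpconv
      have h2 : (fun j => gradient (g (xseq (σ j))) (yseq (σ j))) = fun _ => (0 : Esp m) :=
        funext (fun j => hcrit (σ j))
      rw [h2] at h1
      exact (tendsto_nhds_unique h1 tendsto_const_nhds)
    have : ystar ∈ ⋃ y ∈ t, V y := htcov hystarcrit
    obtain ⟨y, hyt, hyV⟩ := mem_iUnion₂.1 this
    have hycrit : gradient (g x₀) y = 0 := by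
      by_contra hne
      simp only [hV, if_neg hne] at hyV; exact hyV
    have hyint : ((x₀, ystar) : Esp n × Esp m) ∈ interior (W (x₀, y)) := by
      simp only [hV, if_pos hycrit] at hyV; exact hyV
    have hev : ∀ᶠ j in atTop,
        ((xseq (σ j), yseq (σ j)) : Esp n × Esp m) ∈ interior (W (x₀, y)) :=
      hpconv (isOpen_interior.mem_nhds hyint)
    obtain ⟨j, hj⟩ := hev.exists
    exact hnot (σ j) y hyt ⟨hycrit, interior_subset hj⟩
  obtain ⟨δ₁, hδ₁pos, hδ₁prop⟩ := hδ₁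
  -- δ₂ : inside all the finitely many balls
  have hballs : (⋂ y ∈ t, ball x₀ (ε (x₀, y))) ∈ 𝓝 x₀ := by
    refine (Filter.biInter_finset_mem t).2 ?_
    intro y _
    exact ball_mem_nhds x₀ (hε (x₀, y))
  obtain ⟨δ₂, hδ₂pos, hδ₂prop⟩ := Metric.mem_nhds_iff.1 hballs
  refine ⟨min δ₁ δ₂, lt_min hδ₁pos hδ₂pos, ?_⟩
  intro x₁ hx₁ y₁ hy₁
  obtain ⟨y, hyt, hycrit, hymem⟩ := hδ₁prop x₁
    (mem_ball.2 (lt_of_lt_of_le (mem_ball.1 hx₁) (min_le_left _ _))) y₁ hy₁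
  obtain ⟨hcd, hcr, huniq⟩ := hprop (x₀, y) hycrit
  have hsub : ball x₀ (min δ₁ δ₂) ⊆ ball x₀ (ε (x₀, y)) := by
    intro z hz
    have : z ∈ ⋂ y' ∈ t, ball x₀ (ε (x₀, y')) :=
      hδ₂prop (mem_ball.2 (lt_of_lt_of_le (mem_ball.1 hz) (min_le_right _ _)))
    exact mem_iInter₂.1 this y hyt
  refine ⟨φf (x₀, y), hcd.mono hsub, fun x hx => hcr x (hsub hx), ?_⟩
  exact ((huniq (x₁, y₁) hymem hy₁).2).symm

/-- Global extension of a critical branch: under the Morse-parametric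
qualification condition, any solution `(x̄, ȳ)` of `∇_y g(x̄, ȳ) = 0` extends
to a unique globally defined `C^{k-1}` branch `y` of critical points with
`y(x̄) = ȳ`. -/
theorem unique_global_branch
    {n m : ℕ} (k : ℕ) (hk : 2 ≤ k)
    (g : EuclideanSpace ℝ (Fin n) → EuclideanSpace ℝ (Fin m) → ℝ)
    (hg : ContDiff ℝ k (fun p : EuclideanSpace ℝ (Fin n) × EuclideanSpace ℝ (Fin m) => g p.1 p.2))
    (hMorse : ∀ x y, gradient (g x) y = 0 →
      ∃ e : EuclideanSpace ℝ (Fin m) ≃L[ℝ] EuclideanSpace ℝ (Fin m),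
        (e : EuclideanSpace ℝ (Fin m) →L[ℝ] EuclideanSpace ℝ (Fin m))
          = fderiv ℝ (gradient (g x)) y)
    (hnonempty : ∀ x, ∃ y, gradient (g x) y = 0)
    (hlocbdd : ∀ x, ∃ U ∈ nhds x, ∃ C : ℝ,
      ∀ x' ∈ U, ∀ y, gradient (g x') y = 0 → ‖y‖ ≤ C)
    (xbar : EuclideanSpace ℝ (Fin n)) (ybar : EuclideanSpace ℝ (Fin m))
    (hbar : gradient (g xbar) ybar = 0) :
    ∃! y : EuclideanSpace ℝ (Fin n) → EuclideanSpace ℝ (Fin m),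
      ContDiff ℝ (k - 1 : ℕ) y ∧ (∀ x, gradient (g x) (y x) = 0) ∧ y xbar = ybar := by
  classical
  have hΦ : ContDiff ℝ (k - 1 : ℕ) (fun p : Esp n × Esp m => gradient (g p.1) p.2) :=
    contDiff_grad hk hg
  -- the set of radii on which a branch exists
  set S : Set ℝ := {r : ℝ | 0 < r ∧ ∃ yf : Esp n → Esp m,
      ContDiffOn ℝ (k - 1 : ℕ) yf (ball xbar r) ∧
      (∀ x ∈ ball xbar r, gradient (g x) (yf x) = 0) ∧ yf xbar = ybar} with hS
  have hdown : ∀ r ∈ S, ∀ r' : ℝ, 0 < r' → r' ≤ r → r' ∈ S := by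
    rintro r ⟨hr, yf, h1, h2, h3⟩ r' hr' hle
    exact ⟨hr', yf, h1.mono (ball_subset_ball hle),
      fun x hx => h2 x (ball_subset_ball hle hx), h3⟩
  have hS0 : ∃ ε > 0, ε ∈ S := by
    obtain ⟨ε, hε, φ, W, _, hcd, hval, hcrit, _⟩ :=
      local_branch hk hΦ hMorse xbar ybar hbar
    exact ⟨ε, hε, hε, φ, hcd, hcrit, hval⟩
  obtain ⟨ε₀, hε₀, hε₀S⟩ := hS0
  have hSne : S.Nonempty := ⟨ε₀, hε₀S⟩
  -- chosen branches
  have hch : ∀ r : ℝ, ∃ yf : Esp n → Esp m, r ∈ S →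
      (ContDiffOn ℝ (k - 1 : ℕ) yf (ball xbar r) ∧
       (∀ x ∈ ball xbar r, gradient (g x) (yf x) = 0) ∧ yf xbar = ybar) := by
    intro r
    by_cases hr : r ∈ S
    · obtain ⟨_, yf, h1, h2, h3⟩ := hr
      exact ⟨yf, fun _ => ⟨h1, h2, h3⟩⟩
    · exact ⟨fun _ => ybar, fun h => absurd h hr⟩
  choose Yf hYf using hch
  have hagree2 : ∀ r ∈ S, ∀ r' ∈ S, r ≤ r' → EqOn (Yf r) (Yf r') (ball xbar r) := by
    intro r hr r' hr' hle
    have hposr : 0 < r := hr.1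
    refine branch_eqOn hk hΦ hMorse isOpen_ball (convex_ball xbar r).isPreconnected
      (hYf r hr).1.continuousOn
      (((hYf r' hr').1.mono (ball_subset_ball hle)).continuousOn)
      (hYf r hr).2.1 (fun x hx => (hYf r' hr').2.1 x (ball_subset_ball hle hx))
      (mem_ball_self hposr) ?_
    rw [(hYf r hr).2.2, (hYf r' hr').2.2]
  -- main claim: all radii work
  have hALL : ∀ r : ℝ, 0 < r → r ∈ S := by
    by_contra hcon
    push_neg at hcon
    obtain ⟨r₀, hr₀pos, hr₀⟩ := hcon
    have hbdd : BddAbove S := by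
      refine ⟨r₀, fun r hrS => ?_⟩
      by_contra hgt
      push_neg at hgt
      exact hr₀ (hdown r hrS r₀ hr₀pos hgt.le)
    set R : ℝ := sSup S with hR
    have hRpos : 0 < R := lt_of_lt_of_le hε₀ (le_csSup hbdd hε₀S)
    set ρ : Esp n → ℝ := fun x => (dist x xbar + R) / 2 with hρ
    have hmemS : ∀ x : Esp n, dist x xbar < R → ρ x ∈ S := by
      intro x hx
      have h1 : 0 < ρ x := by
        have := dist_nonneg (x := x) (y := xbar); simp only [hρ]; linarith
      have h2 : ρ x < R := by simp only [hρ]; linarith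
      obtain ⟨r, hrS, hlt⟩ := exists_lt_of_lt_csSup hSne h2
      exact hdown r hrS (ρ x) h1 hlt.le
    have hself : ∀ x : Esp n, dist x xbar < R → x ∈ ball xbar (ρ x) := by
      intro x hx
      rw [mem_ball]
      simp only [hρ]; linarith
    set yR : Esp n → Esp m := fun x => Yf (ρ x) x with hyR
    have hyRloc : ∀ x₀ ∈ ball xbar R, ∀ᶠ x in 𝓝 x₀, yR x = Yf (ρ x₀) x := by
      intro x₀ hx₀
      rw [mem_ball] at hx₀
      have hopen : IsOpen {x : Esp n | dist x xbar < ρ x₀} :=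
        isOpen_lt (continuous_id.dist continuous_const) continuous_const
      have hx₀mem : x₀ ∈ {x : Esp n | dist x xbar < ρ x₀} := by
        show dist x₀ xbar < ρ x₀
        simp only [hρ]; linarith
      refine eventually_of_mem (hopen.mem_nhds hx₀mem) ?_
      intro x hx
      have hxR : dist x xbar < R := by
        have : ρ x₀ < R := by simp only [hρ]; linarith
        exact lt_trans hx this
      have hx1 : x ∈ ball xbar (ρ x) := hself x hxR
      have hx2 : x ∈ ball xbar (ρ x₀) := mem_ball.2 hx
      have hxS : ρ x ∈ S := hmemS x hxR
      have hx₀S : ρ x₀ ∈ S := hmemS x₀ hx₀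
      rcases le_total (ρ x) (ρ x₀) with hle | hle
      · exact hagree2 (ρ x) hxS (ρ x₀) hx₀S hle hx1
      · exact (hagree2 (ρ x₀) hx₀S (ρ x) hxS hle hx2).symm
    have hyRcdAt : ∀ x₀ ∈ ball xbar R, ContDiffAt ℝ (k - 1 : ℕ) yR x₀ := by
      intro x₀ hx₀
      have hbase : ContDiffAt ℝ (k - 1 : ℕ) (Yf (ρ x₀)) x₀ :=
        (hYf (ρ x₀) (hmemS x₀ (mem_ball.1 hx₀))).1.contDiffAt
          (isOpen_ball.mem_nhds (hself x₀ (mem_ball.1 hx₀)))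
      exact hbase.congr_of_eventuallyEq (hyRloc x₀ hx₀)
    have hyRcd : ContDiffOn ℝ (k - 1 : ℕ) yR (ball xbar R) :=
      fun x hx => (hyRcdAt x hx).contDiffWithinAt
    have hyRcrit : ∀ x ∈ ball xbar R, gradient (g x) (yR x) = 0 := by
      intro x hx
      exact (hYf (ρ x) (hmemS x (mem_ball.1 hx))).2.1 x (hself x (mem_ball.1 hx))
    have hyRxbar : yR xbar = ybar := by
      have : dist xbar xbar < R := by rw [dist_self]; exact hRpos
      exact (hYf (ρ xbar) (hmemS xbar this)).2.2
    -- patches on the sphere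
    have hpatch0 : ∀ z : Esp n, ∃ δ : ℝ, ∃ φ : Esp n → Esp m, 0 < δ ∧
        (z ∈ sphere xbar R → (δ ≤ R ∧ ContDiffOn ℝ (k - 1 : ℕ) φ (ball z δ) ∧
          (∀ x ∈ ball z δ, gradient (g x) (φ x) = 0) ∧
          EqOn yR φ (ball z δ ∩ ball xbar R))) := by
      intro z
      by_cases hz : z ∈ sphere xbar R
      · obtain ⟨δ₀, hδ₀, hprop⟩ := evenly_covered hk hΦ hMorse hlocbdd z
        set δ : ℝ := min δ₀ R with hδdef
        have hδpos : 0 < δ := lt_min hδ₀ hRpos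
        have hzc : z ∈ closure (ball xbar R) := by
          rw [closure_ball xbar (ne_of_gt hRpos)]
          exact sphere_subset_closedBall hz
        obtain ⟨u, huz, huR⟩ := mem_closure_iff.1 hzc (ball z δ) isOpen_ball
          (mem_ball_self hδpos)
        have huz0 : u ∈ ball z δ₀ := ball_subset_ball (min_le_left _ _) huz
        obtain ⟨φ, hφcd, hφcrit, hφu⟩ := hprop u huz0 (yR u) (hyRcrit u huR)
        have hVconv : Convex ℝ (ball z δ ∩ ball xbar R) :=
          (convex_ball z δ).inter (convex_ball xbar R)
        have hEq : EqOn yR φ (ball z δ ∩ ball xbar R) := by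
          refine branch_eqOn hk hΦ hMorse (isOpen_ball.inter isOpen_ball)
            hVconv.isPreconnected
            (hyRcd.continuousOn.mono inter_subset_right)
            ((hφcd.mono (inter_subset_left.trans
              (ball_subset_ball (min_le_left _ _)))).continuousOn)
            (fun x hx => hyRcrit x hx.2)
            (fun x hx => hφcrit x (ball_subset_ball (min_le_left _ _) hx.1))
            ⟨huz, huR⟩ hφu.symm
        refine ⟨δ, φ, hδpos, fun _ => ⟨min_le_right _ _, ?_, ?_, hEq⟩⟩
        · exact hφcd.mono (ball_subset_ball (min_le_left _ _))
        · exact fun x hx => hφcrit x (ball_subset_ball (min_le_left _ _) hx)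
      · exact ⟨1, fun _ => ybar, one_pos, fun h => absurd h hz⟩
    choose δp φp hδppos hδprest using hpatch0
    -- compatibility of patches
    have hcompat : ∀ z ∈ sphere xbar R, ∀ z' ∈ sphere xbar R, ∀ x : Esp n,
        x ∈ ball z (δp z / 4) → x ∈ ball z' (δp z' / 4) → φp z x = φp z' x := by
      intro z hz z' hz' x hxz hxz'
      obtain ⟨hδzR, hφzcd, hφzcrit, hφzEq⟩ := hδprest z hz
      obtain ⟨hδz'R, hφz'cd, hφz'crit, hφz'Eq⟩ := hδprest z' hz'
      have hdz : dist x z < δp z / 4 := mem_ball.1 hxz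
      have hdz' : dist x z' < δp z' / 4 := mem_ball.1 hxz'
      have hzR : dist z xbar = R := mem_sphere.1 hz
      have hz'R : dist z' xbar = R := mem_sphere.1 hz'
      set d : ℝ := dist x xbar with hd
      set m0 : ℝ := min (δp z) (δp z') with hm0
      have hm0pos : 0 < m0 := lt_min (hδppos z) (hδppos z')
      have hm0R : m0 ≤ R := le_trans (min_le_left _ _) hδzR
      have habs1 : |d - R| < δp z / 4 := by
        have h1 : |dist x xbar - dist z xbar| ≤ dist x z := abs_dist_sub_le x z xbar
        rw [hzR] at h1
        exact lt_of_le_of_lt h1 hdz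
      have habs2 : |d - R| < δp z' / 4 := by
        have h1 : |dist x xbar - dist z' xbar| ≤ dist x z' := abs_dist_sub_le x z' xbar
        rw [hz'R] at h1
        exact lt_of_le_of_lt h1 hdz'
      have habs : |d - R| < m0 / 4 := by
        rcases min_cases (δp z) (δp z') with ⟨hmin, _⟩ | ⟨hmin, _⟩ <;> rw [hm0, hmin]
        · exact habs1
        · exact habs2
      have habs' := abs_lt.1 habs
      have hdpos : 0 < d := by linarith
      set s0 : ℝ := R - m0 / 4 with hs0def
      have hs0pos : 0 < s0 := by simp only [hs0def]; linarith
      set u : Esp n := xbar + (s0 / d) • (x - xbar) with hu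
      have hxd : ‖x - xbar‖ = d := (dist_eq_norm x xbar).symm
      have hu1 : u - xbar = (s0 / d) • (x - xbar) := add_sub_cancel_left xbar _
      have hdu : dist u xbar = s0 := by
        rw [dist_eq_norm, hu1, norm_smul, Real.norm_eq_abs,
          abs_of_nonneg (by positivity), hxd]
        field_simp
      have hu2 : u - x = (s0 / d - 1) • (x - xbar) := by
        have h3 : u - x = (u - xbar) - (x - xbar) := by abel
        rw [h3, hu1, sub_smul, one_smul]
      have hdux : dist u x = |s0 - d| := by
        rw [dist_eq_norm, hu2, norm_smul, Real.norm_eq_abs, hxd]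
        have h4 : s0 / d - 1 = (s0 - d) / d := by field_simp
        rw [h4, abs_div, abs_of_pos hdpos, div_mul_cancel₀ _ (ne_of_gt hdpos)]
      have hduxlt : dist u x < m0 / 2 := by
        rw [hdux]
        have h5 : |s0 - d| ≤ |R - d| + m0 / 4 := by
          have h51 : s0 - d = (R - d) + (-(m0 / 4)) := by simp only [hs0def]; ring
          calc |s0 - d| = |(R - d) + (-(m0 / 4))| := by rw [h51]
            _ ≤ |R - d| + |(-(m0 / 4))| := abs_add_le _ _
            _ = |R - d| + m0 / 4 := by rw [abs_neg, abs_of_nonneg (show (0:ℝ) ≤ m0 / 4 by linarith)]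
        have h6 : |R - d| < m0 / 4 := by rw [abs_sub_comm]; exact habs
        linarith
      have huz : u ∈ ball z (δp z) := by
        rw [mem_ball]
        have h7 := dist_triangle u x z
        have h8 : m0 ≤ δp z := min_le_left _ _
        linarith
      have huz' : u ∈ ball z' (δp z') := by
        rw [mem_ball]
        have h7 := dist_triangle u x z'
        have h8 : m0 ≤ δp z' := min_le_right _ _
        linarith
      have huR : u ∈ ball xbar R := by
        rw [mem_ball, hdu]
        simp only [hs0def]; linarith
      have hval : φp z u = φp z' u := by
        rw [← hφzEq ⟨huz, huR⟩, ← hφz'Eq ⟨huz', huR⟩]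
      have hEq2 : EqOn (φp z) (φp z') (ball z (δp z) ∩ ball z' (δp z')) := by
        refine branch_eqOn hk hΦ hMorse (isOpen_ball.inter isOpen_ball)
          ((convex_ball z (δp z)).inter (convex_ball z' (δp z'))).isPreconnected
          ((hφzcd.mono inter_subset_left).continuousOn)
          ((hφz'cd.mono inter_subset_right).continuousOn)
          (fun w hw => hφzcrit w hw.1) (fun w hw => hφz'crit w hw.2)
          ⟨huz, huz'⟩ hval
      refine hEq2 ⟨?_, ?_⟩
      · exact ball_subset_ball (by linarith [hδppos z]) hxz
      · exact ball_subset_ball (by linarith [hδppos z']) hxz'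
    -- glued extension
    set Y' : Esp n → Esp m := fun x =>
      if x ∈ ball xbar R then yR x
      else if h : ∃ z, z ∈ sphere xbar R ∧ x ∈ ball z (δp z / 4) then φp h.choose x
      else ybar with hY'
    have hY'branch : ∀ z ∈ sphere xbar R, EqOn Y' (φp z) (ball z (δp z / 4)) := by
      intro z hz x hx
      obtain ⟨hδzR, hφzcd, hφzcrit, hφzEq⟩ := hδprest z hz
      have hsub : ball z (δp z / 4) ⊆ ball z (δp z) :=
        ball_subset_ball (by linarith [hδppos z])
      by_cases hxb : x ∈ ball xbar R
      · have h1 : Y' x = yR x := if_pos hxb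
        rw [h1]
        exact hφzEq ⟨hsub hx, hxb⟩
      · have hex : ∃ z', z' ∈ sphere xbar R ∧ x ∈ ball z' (δp z' / 4) := ⟨z, hz, hx⟩
        have h1 : Y' x = φp hex.choose x := by
          simp only [hY', if_neg hxb, dif_pos hex]
        rw [h1]
        exact hcompat hex.choose hex.choose_spec.1 z hz x hex.choose_spec.2 hx
    have hY'ball : EqOn Y' yR (ball xbar R) := fun x hx => if_pos hx
    -- the enlarged ball
    set Ω : Set (Esp n) := ball xbar R ∪ ⋃ z ∈ sphere xbar R, ball z (δp z / 4) with hΩ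
    have hΩopen : IsOpen Ω :=
      isOpen_ball.union (isOpen_biUnion fun z _ => isOpen_ball)
    have hΩsub : closedBall xbar R ⊆ Ω := by
      rw [← ball_union_sphere]
      rintro x (hx | hx)
      · exact Or.inl hx
      · exact Or.inr (mem_biUnion hx (mem_ball_self (by have := hδppos x; linarith)))
    obtain ⟨c, hcpos, hthick⟩ :=
      (isCompact_closedBall xbar R).exists_thickening_subset_open hΩopen hΩsub
    have hballsub : ball xbar (c + R) ⊆ Ω := by
      rw [← thickening_closedBall hcpos hRpos.le xbar]
      exact hthick
    -- Y' is a branch on the enlarged ball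
    have hY'S : c + R ∈ S := by
      refine ⟨by linarith, Y', ?_, ?_, ?_⟩
      · intro x hx
        rcases hballsub hx with hxb | hxp
        · exact ((hyRcdAt x hxb).congr_of_eventuallyEq
            (eventually_of_mem (isOpen_ball.mem_nhds hxb)
              (fun x' hx' => hY'ball hx'))).contDiffWithinAt
        · obtain ⟨z, hz, hxz⟩ := mem_iUnion₂.1 hxp
          obtain ⟨hδzR, hφzcd, hφzcrit, hφzEq⟩ := hδprest z hz
          have hbase : ContDiffAt ℝ (k - 1 : ℕ) (φp z) x :=
            hφzcd.contDiffAt (isOpen_ball.mem_nhds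
              (ball_subset_ball (by linarith [hδppos z]) hxz))
          exact (hbase.congr_of_eventuallyEq
            (eventually_of_mem (isOpen_ball.mem_nhds hxz)
              (fun x' hx' => hY'branch z hz hx'))).contDiffWithinAt
      · intro x hx
        rcases hballsub hx with hxb | hxp
        · rw [hY'ball hxb]; exact hyRcrit x hxb
        · obtain ⟨z, hz, hxz⟩ := mem_iUnion₂.1 hxp
          obtain ⟨hδzR, hφzcd, hφzcrit, hφzEq⟩ := hδprest z hz
          rw [hY'branch z hz hxz]
          exact hφzcrit x (ball_subset_ball (by linarith [hδppos z]) hxz)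
      · rw [hY'ball (mem_ball_self hRpos)]; exact hyRxbar
    have : c + R ≤ R := le_csSup hbdd hY'S
    linarith
  -- global branch
  set ρG : Esp n → ℝ := fun x => dist x xbar + 1 with hρG
  have hρGS : ∀ x : Esp n, ρG x ∈ S := by
    intro x
    refine hALL (ρG x) ?_
    have := dist_nonneg (x := x) (y := xbar)
    simp only [hρG]; linarith
  have hselfG : ∀ x : Esp n, x ∈ ball xbar (ρG x) := by
    intro x
    rw [mem_ball]
    simp only [hρG]; linarith
  set yG : Esp n → Esp m := fun x => Yf (ρG x) x with hyG
  have hyGcrit : ∀ x, gradient (g x) (yG x) = 0 :=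
    fun x => (hYf (ρG x) (hρGS x)).2.1 x (hselfG x)
  have hyGxbar : yG xbar = ybar := (hYf (ρG xbar) (hρGS xbar)).2.2
  have hyGcd : ContDiff ℝ (k - 1 : ℕ) yG := by
    rw [contDiff_iff_contDiffAt]
    intro x₀
    have hopen : IsOpen {x : Esp n | dist x xbar < ρG x₀} :=
      isOpen_lt (continuous_id.dist continuous_const) continuous_const
    have hx₀mem : x₀ ∈ {x : Esp n | dist x xbar < ρG x₀} := by
      show dist x₀ xbar < ρG x₀
      simp only [hρG]; linarith
    have hloc : ∀ᶠ x in 𝓝 x₀, yG x = Yf (ρG x₀) x := by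
      refine eventually_of_mem (hopen.mem_nhds hx₀mem) ?_
      intro x hx
      rcases le_total (ρG x) (ρG x₀) with hle | hle
      · exact hagree2 (ρG x) (hρGS x) (ρG x₀) (hρGS x₀) hle (hselfG x)
      · exact (hagree2 (ρG x₀) (hρGS x₀) (ρG x) (hρGS x) hle (mem_ball.2 hx)).symm
    have hbase : ContDiffAt ℝ (k - 1 : ℕ) (Yf (ρG x₀)) x₀ :=
      (hYf (ρG x₀) (hρGS x₀)).1.contDiffAt (isOpen_ball.mem_nhds (hselfG x₀))
    exact hbase.congr_of_eventuallyEq hloc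
  refine ⟨yG, ⟨hyGcd, hyGcrit, hyGxbar⟩, ?_⟩
  rintro y' ⟨hy'cd, hy'crit, hy'xbar⟩
  funext x
  refine branch_eqOn hk hΦ hMorse isOpen_univ isPreconnected_univ
    hy'cd.continuous.continuousOn hyGcd.continuous.continuousOn
    (fun w _ => hy'crit w) (fun w _ => hyGcrit w)
    (mem_univ xbar) (hy'xbar.trans hyGxbar.symm) (mem_univ x)
end
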